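/- arXiv:2201.12869 — 4 statements merged into one kernel-verified Lean document; each statement's English description precedes it below -/
import Mathlib

section
/- The auxiliary graph of a multi-demand market has no negative-weight cycle. Concretely: let O^1,…,O^K enumerate all optimal allocations and a^i_x = |{t : x ∈ O^t_i}|/K. There do not exist distinct items x_0, x_1, …, x_l and players i_0, …, i_l with a^{i_j}_{x_j} > 0 and a^{i_j}_{x_{j+1}} < 1 for all j = 0,…,l (with x_{l+1} := x_0) such that Σ_{j=0}^{l} (v_{i_j}(x_j) − v_{i_j}(x_{j+1})) < 0. -/
open Finset

/-- The value of a bundle `S` for a player with demand `k` and item valuations `v`: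
the maximum, over subsets `T ⊆ S` with `|T| ≤ k`, of the total value of `T`. -/
noncomputable def bundleValue {X : Type*} [DecidableEq X] (k : ℕ) (v : X → ℝ)
    (S : Finset X) : ℝ :=
  ((S.powerset.filter (fun T => T.card ≤ k)).image (fun T => ∑ x ∈ T, v x)).max'
    (Finset.Nonempty.image ⟨∅, by simp⟩ _)

/-- An allocation: a partition of the items where player `i` gets exactly `k i` items. -/
def IsAllocation {X I : Type*} (k : I → ℕ) (O : I → Finset X) : Prop :=
  (∀ i, (O i).card = k i) ∧ (∀ x : X, ∃! i, x ∈ O i)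

/-- Social welfare of an allocation. -/
noncomputable def socialWelfare {X I : Type*} [DecidableEq X] [Fintype I]
    (v : I → X → ℝ) (k : I → ℕ) (O : I → Finset X) : ℝ :=
  ∑ i, bundleValue (k i) (v i) (O i)

/-- An optimal allocation: an allocation maximizing social welfare. -/
def IsOptimal {X I : Type*} [DecidableEq X] [Fintype I]
    (v : I → X → ℝ) (k : I → ℕ) (O : I → Finset X) : Prop :=
  IsAllocation k O ∧
    ∀ O' : I → Finset X, IsAllocation k O' → socialWelfare v k O' ≤ socialWelfare v k O

/-!
Let `c` be the sum of the incidence matrices of the `K` optimal allocations, so that `c = K • a`.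
A nonnegative integer matrix with column sums `K` and row sums `K * k i` splits, by repeated use
of Hall's theorem, into `K` allocations, so its welfare is at most `K` times the optimum, with
equality for `c`. Since `a > 0` at each `(i_j, x_j)`, shifting one unit of `c` along the cycle
(player `i_j` gives up `x_j` and takes `x_{j+1}`) keeps the matrix nonnegative with the same
margins and changes its welfare by minus the weight of the cycle. A negative cycle would thus
beat the optimum.
-/

def allocationMatrix {X I : Type*} [DecidableEq X] (O : I → Finset X) : I → X → ℕ :=
  fun i x => if x ∈ O i then 1 else 0

lemma sum_allocationMatrix_apply {X I J : Type*} [DecidableEq X] [Fintype J]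
    (O : J → I → Finset X) (i : I) (x : X) :
    (∑ t, allocationMatrix (O t)) i x = #{t | x ∈ O t i} := by
  simp [allocationMatrix, sum_boole]

section MultiAllocation

variable {X I : Type*} [Fintype X] [Fintype I] {k : I → ℕ}

/-- Player `i` receives `c i x` copies of item `x`; `c / K` is a fractional allocation. -/
def IsMultiAllocation (k : I → ℕ) (K : ℕ) (c : I → X → ℕ) : Prop :=
  (∀ x, ∑ i, c i x = K) ∧ ∀ i, ∑ x, c i x = K * k i

lemma IsAllocation.isMultiAllocation_allocationMatrix [DecidableEq X] {O : I → Finset X}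
    (hO : IsAllocation k O) : IsMultiAllocation k 1 (allocationMatrix O) := by
  refine ⟨fun x => ?_, fun i => ?_⟩
  · obtain ⟨i₀, hi₀, huniq⟩ := hO.2 x
    simp only [allocationMatrix, sum_boole, Nat.cast_id, card_eq_one]
    exact ⟨i₀, by ext i; simpa using ⟨huniq i, fun h => h ▸ hi₀⟩⟩
  · simp [allocationMatrix, hO.1 i]

lemma isMultiAllocation_sum {J : Type*} [Fintype J] {K : J → ℕ} {c : J → I → X → ℕ}
    (hc : ∀ t, IsMultiAllocation k (K t) (c t)) : IsMultiAllocation k (∑ t, K t) (∑ t, c t) := by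
  refine ⟨fun x => ?_, fun i => ?_⟩
  · simp only [Finset.sum_apply]
    rw [sum_comm]
    exact sum_congr rfl fun t _ => (hc t).1 x
  · simp only [Finset.sum_apply, sum_mul]
    rw [sum_comm]
    exact sum_congr rfl fun t _ => (hc t).2 i

lemma IsMultiAllocation.of_add {K L : ℕ} {c d : I → X → ℕ}
    (h : IsMultiAllocation k (K + L) (c + d)) (hd : IsMultiAllocation k L d) :
    IsMultiAllocation k K c := by
  refine ⟨fun x => ?_, fun i => ?_⟩
  · have := h.1 x
    simp only [Pi.add_apply, sum_add_distrib, hd.1 x] at this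
    omega
  · have := h.2 i
    simp only [Pi.add_apply, sum_add_distrib, hd.2 i, add_mul] at this
    omega

lemma IsMultiAllocation.of_add_eq_add {K : ℕ} {c c' A D : I → X → ℕ}
    (hc : IsMultiAllocation k K c) (h : c + A = c' + D)
    (hcol : ∀ x, ∑ i, A i x = ∑ i, D i x) (hrow : ∀ i, ∑ x, A i x = ∑ x, D i x) :
    IsMultiAllocation k K c' := by
  refine ⟨fun x => ?_, fun i => ?_⟩
  · have := congr_arg (fun c => ∑ i, c i x) h
    simp only [Pi.add_apply, sum_add_distrib, hc.1 x, hcol x] at this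
    omega
  · have := congr_arg (fun c => ∑ x, c i x) h
    simp only [Pi.add_apply, sum_add_distrib, hc.2 i, hrow i] at this
    omega

end MultiAllocation

lemma isAllocation_of_equiv_sigma {X I : Type*} [Fintype X] [DecidableEq I] {k : I → ℕ}
    (e : X ≃ Σ i, Fin (k i)) :
    IsAllocation k fun i => {x | (e x).1 = i} := by
  refine ⟨fun i => ?_, fun x => ⟨(e x).1, by simp, fun i hi => (mem_filter.1 hi).2.symm⟩⟩
  rw [← Fintype.card_subtype, ← Fintype.card_fin (k i)]
  exact Fintype.card_congr <|
    (e.subtypeEquiv (q := fun s => s.1 = i) fun _ => Iff.rfl).trans (Equiv.sigmaSubtype i)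

section Hall

variable {X I : Type*} [Fintype X] [Fintype I] [DecidableEq I] {k : I → ℕ}

/-- Hall's condition for matching items to slots `⟨i, m⟩` with `m < k i` and `c i x > 0`:
every set `s` of items meets `K * #s` copies, which fill the slots of the players it touches. -/
lemma IsMultiAllocation.card_le_card_biUnion {K : ℕ} (hK : 0 < K) {c : I → X → ℕ}
    (hc : IsMultiAllocation k K c) (s : Finset X) :
    #s ≤ #(s.biUnion fun x => {p : Σ i, Fin (k i) | 0 < c p.1 x}) := by
  set N : Finset I := {i | ∃ x ∈ s, 0 < c i x}
  have hbiUnion : (s.biUnion fun x => {p : Σ i, Fin (k i) | 0 < c p.1 x}) =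
      N.sigma fun _ => univ := by
    ext ⟨i, m⟩
    simp [N]
  rw [hbiUnion, card_sigma]
  simp only [card_univ, Fintype.card_fin]
  refine Nat.le_of_mul_le_mul_left ?_ hK
  calc K * #s = ∑ x ∈ s, ∑ i, c i x := by simp [hc.1, mul_comm]
    _ = ∑ i ∈ N, ∑ x ∈ s, c i x := by
        rw [sum_comm]
        refine (sum_subset (subset_univ N) fun i _ hi => ?_).symm
        simp only [N, mem_filter, mem_univ, true_and, not_exists, not_and, not_lt] at hi
        exact sum_eq_zero fun x hx => Nat.le_zero.1 (hi x hx)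
    _ ≤ ∑ i ∈ N, ∑ x, c i x :=
        sum_le_sum fun i _ => sum_le_sum_of_subset (subset_univ s)
    _ = K * ∑ i ∈ N, k i := by simp [hc.2, mul_sum]

lemma IsMultiAllocation.exists_allocationMatrix_le [DecidableEq X]
    (hsum : ∑ i, k i = Fintype.card X) {K : ℕ} (hK : 0 < K) {c : I → X → ℕ}
    (hc : IsMultiAllocation k K c) :
    ∃ O, IsAllocation k O ∧ allocationMatrix O ≤ c := by
  obtain ⟨f, hf, hfc⟩ :=
    (all_card_le_biUnion_card_iff_exists_injective _).1 (hc.card_le_card_biUnion hK)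
  have hbij : Function.Bijective f :=
    (Fintype.bijective_iff_injective_and_card f).2 ⟨hf, by simp [hsum]⟩
  refine ⟨_, isAllocation_of_equiv_sigma (.ofBijective f hbij), fun i x => ?_⟩
  by_cases hx : (f x).1 = i
  · simpa [allocationMatrix, hx, Nat.one_le_iff_ne_zero, Nat.pos_iff_ne_zero] using hfc x
  · simp [allocationMatrix, hx]

end Hall

lemma bundleValue_eq_sum_of_card_le {X : Type*} [DecidableEq X] {k : ℕ} {v : X → ℝ}
    (hv : ∀ x, 0 ≤ v x) {S : Finset X} (hS : #S ≤ k) : bundleValue k v S = ∑ x ∈ S, v x := by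
  refine le_antisymm (max'_le _ _ _ ?_) (le_max' _ _ ?_)
  · simp only [mem_image, mem_filter, mem_powerset]
    rintro _ ⟨T, ⟨hT, -⟩, rfl⟩
    exact sum_le_sum_of_subset_of_nonneg hT fun x _ _ => hv x
  · exact mem_image_of_mem _ (by simp [hS])

section Welfare

variable {X I : Type*} [Fintype X] [Fintype I] {k : I → ℕ} {v : I → X → ℝ}

variable (v) in
def multiWelfare : (I → X → ℕ) →+ ℝ where
  toFun c := ∑ i, ∑ x, (c i x : ℝ) * v i x
  map_zero' := by simp
  map_add' c d := by simp [add_mul, sum_add_distrib]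

lemma IsAllocation.socialWelfare_eq_multiWelfare [DecidableEq X] (hv : ∀ i x, 0 ≤ v i x)
    {O : I → Finset X} (hO : IsAllocation k O) :
    socialWelfare v k O = multiWelfare v (allocationMatrix O) := by
  refine sum_congr rfl fun i _ => ?_
  rw [bundleValue_eq_sum_of_card_le (hv i) (hO.1 i).le]
  simp [allocationMatrix]

/-- Peeling off one allocation at a time (Hall) writes a `K`-fold allocation as a sum of `K`
allocations. -/
lemma IsMultiAllocation.multiWelfare_le [DecidableEq X] [DecidableEq I]
    (hsum : ∑ i, k i = Fintype.card X) (hv : ∀ i x, 0 ≤ v i x) {O : I → Finset X}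
    (hO : IsOptimal v k O) :
    ∀ {K : ℕ} {c : I → X → ℕ}, IsMultiAllocation k K c →
      multiWelfare v c ≤ K * socialWelfare v k O
  | 0, c, hc => by
    have : c = 0 := funext fun i => funext fun x =>
      (sum_eq_zero_iff.1 (hc.1 x)) i (mem_univ i)
    simp [this]
  | K + 1, c, hc => by
    obtain ⟨O', hO', hle⟩ := hc.exists_allocationMatrix_le hsum K.succ_pos
    have hsplit : c = (c - allocationMatrix O') + allocationMatrix O' :=
      (tsub_add_cancel_of_le hle).symm
    have hrest : IsMultiAllocation k K (c - allocationMatrix O') :=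
      (hsplit ▸ hc).of_add hO'.isMultiAllocation_allocationMatrix
    rw [hsplit, map_add, ← hO'.socialWelfare_eq_multiWelfare hv]
    push_cast
    linarith [hrest.multiWelfare_le hsum hv hO, hO.2 O' hO']

end Welfare

section PathCount

variable {X I J : Type*} [DecidableEq X] [DecidableEq I] [Fintype J]

def pathCount (p : J → I × X) : I → X → ℕ := fun i x => #{j | p j = (i, x)}

lemma sum_pathCount_left [Fintype I] (p : J → I × X) (x : X) :
    ∑ i, pathCount p i x = #{j | (p j).2 = x} := by
  simp only [pathCount, card_filter]
  rw [sum_comm]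
  exact sum_congr rfl fun j _ => by simp [Prod.ext_iff, ite_and, eq_comm]

lemma sum_pathCount_right [Fintype X] (p : J → I × X) (i : I) :
    ∑ x, pathCount p i x = #{j | (p j).1 = i} := by
  simp only [pathCount, card_filter]
  rw [sum_comm]
  exact sum_congr rfl fun j _ => by simp [Prod.ext_iff, ite_and, eq_comm]

lemma multiWelfare_pathCount [Fintype X] [Fintype I] (v : I → X → ℝ) (p : J → I × X) :
    multiWelfare v (pathCount p) = ∑ j, v (p j).1 (p j).2 := by
  simp only [multiWelfare, AddMonoidHom.coe_mk, ZeroHom.coe_mk, pathCount, card_filter]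
  push_cast
  simp only [sum_mul, ite_mul, one_mul, zero_mul]
  rw [← Fintype.sum_prod_type', sum_comm]
  exact sum_congr rfl fun j _ => by simp [eq_comm]

lemma pathCount_le [Fintype X] [Fintype I] {p : J → I × X} (hp : Function.Injective p)
    {c : I → X → ℕ} (hc : ∀ j, 0 < c (p j).1 (p j).2) : pathCount p ≤ c := by
  intro i x
  have hle : pathCount p i x ≤ 1 :=
    card_le_one.2 fun j hj j' hj' => hp ((mem_filter.1 hj).2.trans (mem_filter.1 hj').2.symm)
  obtain h0 | h1 := Nat.le_one_iff_eq_zero_or_eq_one.1 hle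
  · simp [h0]
  · obtain ⟨j, hj⟩ := card_pos.1 (h1 ▸ Nat.one_pos)
    have hpos := hc j
    rw [(mem_filter.1 hj).2] at hpos
    exact h1.trans_le hpos

/-- Each `ii j` gives up `xs j` and takes `xs (j + 1)` instead. -/
lemma IsMultiAllocation.rotate_cycle [Fintype X] [Fintype I] {k : I → ℕ} {K : ℕ}
    {c : I → X → ℕ} (hc : IsMultiAllocation k K c) {n : ℕ} (ii : Fin (n + 1) → I)
    (xs : Fin (n + 1) → X) (hle : pathCount (fun j => (ii j, xs j)) ≤ c) :
    IsMultiAllocation k K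
      (c + pathCount (fun j => (ii j, xs (j + 1))) - pathCount fun j => (ii j, xs j)) :=
  hc.of_add_eq_add (tsub_add_cancel_of_le (hle.trans le_self_add)).symm
    (fun x => by
      simp only [sum_pathCount_left]
      exact card_equiv (Equiv.addRight 1) (by simp))
    (fun i => by simp only [sum_pathCount_right])

end PathCount

theorem no_negative_cycle_in_auxiliary_graph_general
    {X I : Type*} [Fintype X] [DecidableEq X] [Fintype I]
    (k : I → ℕ) (hsum : ∑ i, k i = Fintype.card X)
    (v : I → X → ℝ) (hv : ∀ i x, 0 ≤ v i x)
    (K : ℕ)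
    (Oenum : Fin K → I → Finset X)
    (hall : ∀ O : I → Finset X, IsOptimal v k O ↔ ∃ t, Oenum t = O)
    (a : I → X → ℝ)
    (ha : ∀ i x, a i x =
      ((Finset.univ.filter (fun t : Fin K => x ∈ Oenum t i)).card : ℝ) / K) :
    ¬ ∃ (l : ℕ) (xs : Fin (l + 1) → X) (ii : Fin (l + 1) → I),
        Function.Injective xs ∧
        (∀ j, 0 < a (ii j) (xs j)) ∧
        (∀ j, a (ii j) (xs (j + 1)) < 1) ∧
        (∑ j, (v (ii j) (xs j) - v (ii j) (xs (j + 1)))) < 0 := by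
  classical
  rintro ⟨l, xs, ii, hxs, hpos, -, hneg⟩
  have hopt : ∀ t, IsOptimal v k (Oenum t) := fun t => (hall _).2 ⟨t, rfl⟩
  -- `c i x = K * a i x` counts the optimal allocations giving `x` to `i`.
  set c := ∑ t, allocationMatrix (Oenum t)
  have hc : IsMultiAllocation k K c := by
    simpa using isMultiAllocation_sum fun t => (hopt t).1.isMultiAllocation_allocationMatrix
  have hac : ∀ i x, a i x = c i x / K := by simp [ha, c, sum_allocationMatrix_apply]
  have hK : 0 < K := Nat.pos_of_ne_zero fun h => by simpa [hac, h] using hpos 0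
  have hcpos : ∀ j, 0 < c (ii j) (xs j) := fun j => by
    simpa [hac, hK] using hpos j
  set O₀ := Oenum ⟨0, hK⟩
  have hW : ∀ t, socialWelfare v k (Oenum t) = socialWelfare v k O₀ := fun t =>
    le_antisymm ((hopt _).2 _ (hopt t).1) ((hopt t).2 _ (hopt _).1)
  have hcW : multiWelfare v c = K * socialWelfare v k O₀ := by
    simp [c, map_sum, ← (hopt _).1.socialWelfare_eq_multiWelfare hv, hW]
  set D := pathCount fun j => (ii j, xs j)
  set A := pathCount fun j => (ii j, xs (j + 1))
  have hD : D ≤ c := pathCount_le (fun j j' h => hxs (congrArg Prod.snd h)) hcpos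
  have hc' : c + A = (c + A - D) + D := (tsub_add_cancel_of_le (hD.trans le_self_add)).symm
  have hle := (hc.rotate_cycle ii xs hD).multiWelfare_le hsum hv (hopt ⟨0, hK⟩)
  have hval := congr_arg (multiWelfare v) hc'
  simp only [map_add, multiWelfare_pathCount, A, D] at hval
  rw [sum_sub_distrib] at hneg
  linarith

/-- The auxiliary graph of a multi-demand market has no negative-weight cycle. -/
theorem no_negative_cycle_in_auxiliary_graph
    {X I : Type*} [Fintype X] [DecidableEq X] [Fintype I] [DecidableEq I]
    (k : I → ℕ) (hk : ∀ i, 1 ≤ k i) (hsum : ∑ i, k i = Fintype.card X)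
    (v : I → X → ℝ) (hv : ∀ i x, 0 ≤ v i x)
    (K : ℕ) (hK : 1 ≤ K)
    (Oenum : Fin K → I → Finset X)
    (hinj : Function.Injective Oenum)
    (hall : ∀ O : I → Finset X, IsOptimal v k O ↔ ∃ t, Oenum t = O)
    (a : I → X → ℝ)
    (ha : ∀ i x, a i x =
      ((Finset.univ.filter (fun t : Fin K => x ∈ Oenum t i)).card : ℝ) / K) :
    ¬ ∃ (l : ℕ) (xs : Fin (l + 1) → X) (ii : Fin (l + 1) → I),
        Function.Injective xs ∧
        (∀ j, 0 < a (ii j) (xs j)) ∧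
        (∀ j, a (ii j) (xs (j + 1)) < 1) ∧
        (∑ j, (v (ii j) (xs j) - v (ii j) (xs (j + 1)))) < 0 :=
  no_negative_cycle_in_auxiliary_graph_general k hsum v hv K Oenum hall a ha
end

section
/- Let O^1,…,O^K enumerate all optimal allocations of a multi-demand market and a^i_x = |{t : x ∈ O^t_i}|/K. Suppose a player î and items x, y satisfy a^{î}_x > 0 and a^{î}_y < 1 (so the auxiliary graph has an edge x → y induced by î). Then there exist l ≥ 1, items z_0 = x, z_1 = y, z_2, …, z_l (with z_{l+1} := z_0) and players j_0 = î, j_1, …, j_l such that a^{j_s}_{z_s} > 0 and a^{j_s}_{z_{s+1}} < 1 for all s = 0,…,l and Σ_{s=0}^{l} (v_{j_s}(z_s) − v_{j_s}(z_{s+1})) = 0, if and only if 0 < a^{î}_x < 1 and 0 < a^{î}_y < 1. -/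
open Finset

/-!
With `IsArc v k i x y` meaning that some optimal allocation gives `x` to `i` and some optimal
allocation does not give `y` to `i` (that is, `0 < a^i_x` and `a^i_y < 1`), the right-hand side
says that `y → x` is an arc induced by `i` as well.

Along a zero-weight cycle, take for every arc an optimal allocation witnessing its tail and push
one unit of mass along every arc. The count matrix obtained has row sums `n k_i` and column sums
`n`, so by Hall's theorem it splits into `n` allocations; their total welfare is that of the `n`
optimal witnesses minus the weight of the cycle, so they are all optimal, and they witness every
reversed arc.

Conversely, two optimal allocations `O, O'` are related by a permutation of the items sending
`O' i \ O i` onto `O i \ O' i` for every `i`, with a prescribed first step. An orbit of it is a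
closed walk of arcs, and swapping the owners along the orbit in either allocation shows that this
walk has weight zero. Gluing two such orbits along `x → y` and one further arc induced by the
same player gives the cycle.
-/

lemma Equiv.Perm.exists_comp_eq_of_card_fiber_eq {α γ : Type*} [Fintype α] [DecidableEq α]
    [DecidableEq γ] {f g : α → γ} (h : ∀ c, #{a | f a = c} = #{a | g a = c}) {a b : α}
    (hab : g b = f a) :
    ∃ e : Equiv.Perm α, (∀ x, g (e x) = f x) ∧ e a = b := by
  let e₀ : α ≃ α := Equiv.ofFiberEquiv (f := f) (g := g) fun c =>
    Fintype.equivOfCardEq (by rw [Fintype.card_subtype, Fintype.card_subtype, h c])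
  have he₀ : ∀ x, g (e₀ x) = f x := Equiv.ofFiberEquiv_map _
  refine ⟨e₀.trans (Equiv.swap (e₀ a) b), fun x => ?_, by simp⟩
  simp only [Equiv.trans_apply, Equiv.swap_apply_def]
  split_ifs with h₁ h₂
  · rw [e₀.injective h₁, hab]
  · rw [he₀ a, ← hab, ← h₂, he₀ x]
  · exact he₀ x

lemma Finset.sum_range_succ_eq_of_eq {M : Type*} [AddCancelCommMonoid M] {f : ℕ → M} {n : ℕ}
    (h : f n = f 0) : ∑ s ∈ range n, f (s + 1) = ∑ s ∈ range n, f s :=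
  add_right_cancel (b := f 0) <| by rw [← sum_range_succ', sum_range_succ, h]

lemma card_filter_div_pos_iff {K : ℕ} (p : Fin K → Prop) [DecidablePred p] :
    0 < (#{t | p t} : ℝ) / K ↔ ∃ t, p t := by
  refine ⟨fun h => ?_, fun ⟨t, ht⟩ => div_pos ?_ (Nat.cast_pos.2 t.pos)⟩
  · by_contra hne
    simp [filter_false_of_mem fun t _ => not_exists.1 hne t] at h
  · exact_mod_cast card_pos.2 ⟨t, mem_filter.2 ⟨mem_univ t, ht⟩⟩

lemma card_filter_div_lt_one_iff {K : ℕ} (hK : 0 < K) (p : Fin K → Prop) [DecidablePred p] :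
    (#{t | p t} : ℝ) / K < 1 ↔ ∃ t, ¬ p t := by
  have h := card_lt_iff_ne_univ {t | p t}
  rw [Fintype.card_fin] at h
  rw [div_lt_one (Nat.cast_pos.2 hK), Nat.cast_lt, h, Ne, filter_eq_self]
  simp

section Owner

variable {X I : Type*} [Fintype X] [DecidableEq I]

def ofOwner (σ : X → I) : I → Finset X := fun i => {w | σ w = i}

@[simp]
lemma mem_ofOwner {σ : X → I} {i : I} {w : X} : w ∈ ofOwner σ i ↔ σ w = i := by
  simp [ofOwner]

lemma isAllocation_ofOwner_iff {k : I → ℕ} {σ : X → I} :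
    IsAllocation k (ofOwner σ) ↔ ∀ i, #{w | σ w = i} = k i :=
  ⟨fun h => h.1, fun h => ⟨h, fun w => ⟨σ w, by simp, fun i hi => (mem_ofOwner.1 hi).symm⟩⟩⟩

lemma IsAllocation.exists_eq_ofOwner {k : I → ℕ} {O : I → Finset X} (h : IsAllocation k O) :
    ∃ σ : X → I, O = ofOwner σ := by
  choose σ hσ using fun w => (h.2 w).exists
  refine ⟨σ, funext fun i => Finset.ext fun w => ?_⟩
  rw [mem_ofOwner]
  exact ⟨fun hw => (h.2 w).unique (hσ w) hw, fun hw => hw ▸ hσ w⟩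

end Owner

section Welfare

variable {X I : Type*} [DecidableEq X] {k : I → ℕ}

lemma IsAllocation.card_sdiff_comm {O O' : I → Finset X} (hO : IsAllocation k O)
    (hO' : IsAllocation k O') (i : I) : #(O i \ O' i) = #(O' i \ O i) := by
  have h := card_sdiff_add_card_inter (O i) (O' i)
  have h' := card_sdiff_add_card_inter (O' i) (O i)
  rw [inter_comm, hO'.1] at h'
  rw [hO.1] at h
  omega

lemma IsAllocation.card_filter_mem [Fintype I] {O : I → Finset X} (hO : IsAllocation k O)
    (w : X) : #{i | w ∈ O i} = 1 := by
  obtain ⟨i, hi, hu⟩ := hO.2 w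
  exact card_eq_one.2 ⟨i, by ext j; simpa using ⟨hu j, fun h => h ▸ hi⟩⟩

lemma bundleValue_eq_sum {n : ℕ} {u : X → ℝ} (hu : ∀ x, 0 ≤ u x) {S : Finset X} (hS : #S ≤ n) :
    bundleValue n u S = ∑ x ∈ S, u x := by
  unfold bundleValue
  refine le_antisymm (max'_le _ _ _ ?_) (le_max' _ _ ?_)
  · simp only [mem_image, mem_filter, mem_powerset]
    rintro _ ⟨T, ⟨hT, -⟩, rfl⟩
    exact sum_le_sum_of_subset_of_nonneg hT fun x _ _ => hu x
  · exact mem_image.2 ⟨S, mem_filter.2 ⟨mem_powerset.2 subset_rfl, hS⟩, rfl⟩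

variable [Fintype I] {v : I → X → ℝ}

lemma socialWelfare_eq_sum (hv : ∀ i x, 0 ≤ v i x) {O : I → Finset X} (hO : IsAllocation k O) :
    socialWelfare v k O = ∑ i, ∑ w ∈ O i, v i w :=
  sum_congr rfl fun i _ => bundleValue_eq_sum (hv i) (hO.1 i).le

lemma socialWelfare_ofOwner [Fintype X] [DecidableEq I] (hv : ∀ i x, 0 ≤ v i x) {σ : X → I}
    (hσ : IsAllocation k (ofOwner σ)) : socialWelfare v k (ofOwner σ) = ∑ w, v (σ w) w := by
  rw [socialWelfare_eq_sum hv hσ, ← sum_fiberwise univ σ (fun w => v (σ w) w)]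
  refine sum_congr rfl fun i _ => sum_congr ?_ fun w hw => ?_
  · ext w; simp
  · rw [(mem_filter.1 hw).2]

lemma isOptimal_of_sum_socialWelfare_le {ι : Type*} [Fintype ι] {O O' : ι → I → Finset X}
    (hO : ∀ t, IsOptimal v k (O t)) (hO' : ∀ t, IsAllocation k (O' t))
    (h : ∑ t, socialWelfare v k (O t) ≤ ∑ t, socialWelfare v k (O' t)) (t : ι) :
    IsOptimal v k (O' t) := by
  have hle : ∀ t ∈ univ, socialWelfare v k (O' t) ≤ socialWelfare v k (O t) :=
    fun t _ => (hO t).2 _ (hO' t)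
  have heq := (sum_eq_sum_iff_of_le hle).1 (le_antisymm (sum_le_sum hle) h) t (mem_univ t)
  exact ⟨hO' t, fun A hA => heq ▸ (hO t).2 A hA⟩

def IsArc (v : I → X → ℝ) (k : I → ℕ) (i : I) (x y : X) : Prop :=
  (∃ O, IsOptimal v k O ∧ x ∈ O i) ∧ ∃ O, IsOptimal v k O ∧ y ∉ O i

end Welfare

section Counting

variable {X I ι : Type*} [DecidableEq X] [Fintype ι]

def allocCount (O : ι → I → Finset X) (i : I) (w : X) : ℕ := #{t | w ∈ O t i}

def pairCount [DecidableEq I] (f : ι → I) (g : ι → X) (i : I) (w : X) : ℕ :=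
  #{t | f t = i ∧ g t = w}

lemma allocCount_pos_iff {O : ι → I → Finset X} {i : I} {w : X} :
    0 < allocCount O i w ↔ ∃ t, w ∈ O t i := by
  simp [allocCount, card_pos, filter_nonempty_iff]

lemma allocCount_lt_card_iff {O : ι → I → Finset X} {i : I} {w : X} :
    allocCount O i w < Fintype.card ι ↔ ∃ t, w ∉ O t i := by
  simp [allocCount, card_lt_iff_ne_univ, filter_eq_self]

lemma allocCount_le_card (O : ι → I → Finset X) (i : I) (w : X) :
    allocCount O i w ≤ Fintype.card ι :=
  card_le_univ _

lemma pairCount_pos_iff [DecidableEq I] {f : ι → I} {g : ι → X} {i : I} {w : X} :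
    0 < pairCount f g i w ↔ ∃ t, f t = i ∧ g t = w := by
  simp [pairCount, card_pos, filter_nonempty_iff]

variable {k : I → ℕ} {O : ι → I → Finset X}

lemma sum_allocCount_left [Fintype I] (hO : ∀ t, IsAllocation k (O t)) (w : X) :
    ∑ i, allocCount O i w = Fintype.card ι := by
  simp only [allocCount, card_filter]
  rw [sum_comm, ← card_univ, card_eq_sum_ones]
  exact sum_congr rfl fun t _ => by rw [← card_filter, (hO t).card_filter_mem]

lemma sum_allocCount_right [Fintype X] (hO : ∀ t, IsAllocation k (O t)) (i : I) :
    ∑ w, allocCount O i w = Fintype.card ι * k i := by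
  simp only [allocCount, card_filter]
  rw [sum_comm]
  simp [(hO _).1 i]

lemma sum_socialWelfare_eq [Fintype X] [Fintype I] {v : I → X → ℝ} (hv : ∀ i x, 0 ≤ v i x)
    (hO : ∀ t, IsAllocation k (O t)) :
    ∑ t, socialWelfare v k (O t) = ∑ i, ∑ w, (allocCount O i w : ℝ) * v i w := by
  simp only [socialWelfare_eq_sum hv (hO _), allocCount, card_filter, Nat.cast_sum, sum_mul,
    Nat.cast_ite, Nat.cast_one, Nat.cast_zero, ite_mul, one_mul, zero_mul]
  simp_rw [sum_comm (s := (univ : Finset X)) (t := (univ : Finset ι))]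
  rw [sum_comm]
  simp [sum_ite_mem]

variable [DecidableEq I] (f : ι → I) (g : ι → X)

lemma sum_pairCount_left [Fintype I] (w : X) : ∑ i, pairCount f g i w = #{t | g t = w} := by
  rw [card_eq_sum_card_fiberwise (f := f) (t := univ) (fun _ _ => mem_coe.2 (mem_univ _))]
  simp [pairCount, filter_filter, and_comm]

lemma sum_pairCount_right [Fintype X] (i : I) : ∑ w, pairCount f g i w = #{t | f t = i} := by
  rw [card_eq_sum_card_fiberwise (f := g) (t := univ) (fun _ _ => mem_coe.2 (mem_univ _))]
  simp [pairCount, filter_filter]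

lemma sum_pairCount_mul [Fintype X] [Fintype I] (c : I → X → ℝ) :
    ∑ i, ∑ w, (pairCount f g i w : ℝ) * c i w = ∑ t, c (f t) (g t) := by
  simp only [pairCount, card_filter, Nat.cast_sum, sum_mul, Nat.cast_ite, Nat.cast_one,
    Nat.cast_zero, ite_mul, one_mul, zero_mul]
  simp_rw [sum_comm (s := (univ : Finset X)) (t := (univ : Finset ι))]
  rw [sum_comm]
  simp [ite_and]

end Counting

section Decomposition

variable {X I : Type*} [Fintype X] [Fintype I] [DecidableEq I] {k : I → ℕ}

lemma exists_allocation_forall_pos (hsum : ∑ i, k i = Fintype.card X) {M : ℕ} (hM : 0 < M)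
    {b : I → X → ℕ} (hcol : ∀ w, ∑ i, b i w = M) (hrow : ∀ i, ∑ w, b i w = M * k i) :
    ∃ σ : X → I, IsAllocation k (ofOwner σ) ∧ ∀ w, 0 < b (σ w) w := by
  -- player `i` has `k i` slots, and item `w` may take a slot of any `i` with `0 < b i w`
  let N : X → Finset (Σ i, Fin (k i)) := fun w => {p | 0 < b p.1 w}
  have hHall : ∀ s : Finset X, #s ≤ #(s.biUnion N) := by
    intro s
    let J : Finset I := {i | ∃ w ∈ s, 0 < b i w}
    have hN : s.biUnion N = J.sigma fun _ => univ := by ext ⟨i, c⟩; simp [N, J]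
    have : M * #s ≤ M * ∑ i ∈ J, k i := calc
      M * #s = ∑ i, ∑ w ∈ s, b i w := by rw [sum_comm]; simp [hcol, mul_comm]
      _ = ∑ i ∈ J, ∑ w ∈ s, b i w := by
        refine (sum_subset (subset_univ J) fun i _ hi => sum_eq_zero fun w hw => ?_).symm
        simp only [J, mem_filter, mem_univ, true_and, not_exists, not_and, not_lt] at hi
        exact Nat.le_zero.1 (hi w hw)
      _ ≤ ∑ i ∈ J, M * k i :=
        sum_le_sum fun i _ => (sum_le_sum_of_subset (subset_univ s)).trans (hrow i).le
      _ = M * ∑ i ∈ J, k i := (mul_sum ..).symm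
    rw [hN, card_sigma]
    simpa using Nat.le_of_mul_le_mul_left this hM
  obtain ⟨f, hf, hfN⟩ := (all_card_le_biUnion_card_iff_exists_injective N).1 hHall
  have hbij : f.Bijective := (Fintype.bijective_iff_injective_and_card f).2 ⟨hf, by simp [hsum]⟩
  refine ⟨fun w => (f w).1, isAllocation_ofOwner_iff.2 fun i => ?_,
    fun w => by simpa [N] using hfN w⟩
  rw [card_equiv (Equiv.ofBijective f hbij) (t := {p | p.1 = i}) (by simp),
    show ({p | p.1 = i} : Finset (Σ j, Fin (k j))) = ({i} : Finset I).sigma fun _ => univ by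
      ext ⟨j, c⟩; simp, card_sigma]
  simp

lemma exists_allocations_allocCount_eq [DecidableEq X] (hsum : ∑ i, k i = Fintype.card X) :
    ∀ (M : ℕ) (b : I → X → ℕ), (∀ w, ∑ i, b i w = M) → (∀ i, ∑ w, b i w = M * k i) →
      ∃ O : Fin M → I → Finset X, (∀ t, IsAllocation k (O t)) ∧ ∀ i w, allocCount O i w = b i w
  | 0, b, hcol, _ => ⟨Fin.elim0, fun t => t.elim0, fun i w => by
      simpa [allocCount, eq_comm] using
        (single_le_sum (fun j _ => Nat.zero_le (b j w)) (mem_univ i)).trans (hcol w).le⟩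
  | M + 1, b, hcol, hrow => by
    obtain ⟨σ, hσ, hpos⟩ := exists_allocation_forall_pos hsum M.succ_pos hcol hrow
    obtain ⟨b', hb'⟩ : ∃ b' : I → X → ℕ, ∀ i w, b i w = (if σ w = i then 1 else 0) + b' i w := by
      choose b' hb' using fun i w => Nat.exists_eq_add_of_le
        (show (if σ w = i then 1 else 0) ≤ b i w by
          split_ifs with h <;> [exact h ▸ hpos w; exact Nat.zero_le _])
      exact ⟨b', hb'⟩
    obtain ⟨O, hO, hcount⟩ := exists_allocations_allocCount_eq hsum M b'
      (fun w => by
        have := hcol w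
        simp only [hb', sum_add_distrib, sum_ite_eq, mem_univ, if_true] at this
        omega)
      (fun i => by
        have := hrow i
        simp only [hb', sum_add_distrib, sum_boole, isAllocation_ofOwner_iff.1 hσ i] at this
        push_cast at this
        linarith)
    refine ⟨Fin.cons (ofOwner σ) O, Fin.cases hσ hO, fun i w => ?_⟩
    rw [allocCount, Fin.card_filter_univ_succ', hb' i w, ← hcount i w]
    simp [allocCount]

end Decomposition

section Forward

variable {X I : Type*} [Fintype X] [DecidableEq X] [Fintype I] [DecidableEq I]
  {k : I → ℕ} {v : I → X → ℝ} {n : ℕ} [NeZero n]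

-- `O'` is the family `O` with one unit of mass pushed along every arc of the cycle.
theorem exists_optimal_allocCount_add_eq (hsum : ∑ i, k i = Fintype.card X)
    (hv : ∀ i x, 0 ≤ v i x) (z : Fin n → X) (j : Fin n → I) {O : Fin n → I → Finset X}
    (hO : ∀ s, IsOptimal v k (O s)) (hzO : ∀ s, z s ∈ O s (j s))
    (hw : ∑ s, (v (j s) (z s) - v (j s) (z (s + 1))) = 0) :
    ∃ O' : Fin n → I → Finset X, (∀ t, IsOptimal v k (O' t)) ∧ ∀ i w,
      allocCount O i w + pairCount j (fun s => z (s + 1)) i w =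
        pairCount j z i w + allocCount O' i w := by
  set hd := pairCount j fun s => z (s + 1)
  set tl := pairCount j z
  have htl : ∀ i w, tl i w ≤ allocCount O i w + hd i w := fun i w =>
    (card_le_card fun s hs => by
      obtain ⟨rfl, rfl⟩ := (mem_filter.1 hs).2
      exact mem_filter.2 ⟨mem_univ s, hzO s⟩).trans le_self_add
  choose b hb using fun i w => Nat.exists_eq_add_of_le (htl i w)
  have hb' : (fun i w => allocCount O i w + hd i w) = fun i w => tl i w + b i w := funext₂ hb
  have hshift : ∀ w, #{s | z (s + 1) = w} = #{s | z s = w} := fun w =>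
    card_equiv (Equiv.addRight 1) (by simp)
  have hcol : ∀ w, ∑ i, b i w = n := fun w => by
    have := congrArg (∑ i, · i w) hb'
    simp only [sum_add_distrib, hd, tl, sum_allocCount_left (fun s => (hO s).1),
      sum_pairCount_left, hshift, Fintype.card_fin] at this
    omega
  have hrow : ∀ i, ∑ w, b i w = n * k i := fun i => by
    have := congrArg (∑ w, · i w) hb'
    simp only [sum_add_distrib, hd, tl, sum_allocCount_right (fun s => (hO s).1),
      sum_pairCount_right, Fintype.card_fin] at this
    omega
  obtain ⟨O', hO'alloc, hO'count⟩ := exists_allocations_allocCount_eq hsum n b hcol hrow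
  refine ⟨O', isOptimal_of_sum_socialWelfare_le hO hO'alloc ?_, fun i w => hO'count i w ▸ hb i w⟩
  have := congrArg (fun m : I → X → ℕ => ∑ i, ∑ w, (m i w : ℝ) * v i w) hb'
  simp only [Nat.cast_add, add_mul, sum_add_distrib, hd, tl, sum_pairCount_mul] at this
  rw [sum_socialWelfare_eq hv fun s => (hO s).1, sum_socialWelfare_eq hv hO'alloc]
  simp only [hO'count]
  rw [sum_sub_distrib] at hw
  linarith

theorem isArc_swap_of_cycle (hsum : ∑ i, k i = Fintype.card X) (hv : ∀ i x, 0 ≤ v i x)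
    (z : Fin n → X) (j : Fin n → I) (harc : ∀ s, IsArc v k (j s) (z s) (z (s + 1)))
    (hw : ∑ s, (v (j s) (z s) - v (j s) (z (s + 1))) = 0) (s₀ : Fin n) :
    IsArc v k (j s₀) (z (s₀ + 1)) (z s₀) := by
  choose O hO hzO using fun s => (harc s).1
  obtain ⟨O', hO', hcount⟩ := exists_optimal_allocCount_add_eq hsum hv z j hO hzO hw
  constructor
  · by_cases htl : 0 < pairCount j z (j s₀) (z (s₀ + 1))
    · obtain ⟨s, hs, hzs⟩ := pairCount_pos_iff.1 htl
      exact ⟨O s, hO s, hs ▸ hzs ▸ hzO s⟩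
    · have hhd : 0 < pairCount j (fun s => z (s + 1)) (j s₀) (z (s₀ + 1)) :=
        pairCount_pos_iff.2 ⟨s₀, rfl, rfl⟩
      obtain ⟨t, ht⟩ := allocCount_pos_iff.1
        (show 0 < allocCount O' (j s₀) (z (s₀ + 1)) by
          have := hcount (j s₀) (z (s₀ + 1)); omega)
      exact ⟨O' t, hO' t, ht⟩
  · by_cases hhd : 0 < pairCount j (fun s => z (s + 1)) (j s₀) (z s₀)
    · obtain ⟨s, hs, hzs⟩ := pairCount_pos_iff.1 hhd
      exact hs ▸ hzs ▸ (harc s).2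
    · have htl : 0 < pairCount j z (j s₀) (z s₀) := pairCount_pos_iff.2 ⟨s₀, rfl, rfl⟩
      have hle := allocCount_le_card O (j s₀) (z s₀)
      obtain ⟨t, ht⟩ := allocCount_lt_card_iff.1
        (show allocCount O' (j s₀) (z s₀) < Fintype.card (Fin n) by
          have := hcount (j s₀) (z s₀); omega)
      exact ⟨O' t, hO' t, ht⟩

end Forward

section Exchange

variable {X I : Type*}

lemma card_filter_eq_of_map_eq [DecidableEq I] {σ σ' : X → I} (F : Equiv.Perm X) {C : Finset X}
    (hC : C.map F.toEmbedding = C) (hF : ∀ w ∈ C, σ (F w) = σ' w) (i : I) :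
    #{w ∈ C | σ' w = i} = #{w ∈ C | σ w = i} := by
  conv_rhs => rw [← hC, filter_map, card_map]
  exact congrArg card (filter_congr fun w hw => by simp [hF w hw])

variable [Fintype X] [DecidableEq X]

lemma sum_apply_ite_mem {M : Type*} [AddCommMonoid M] (C : Finset X) (σ σ' : X → I)
    (φ : I → X → M) :
    ∑ w, φ (if w ∈ C then σ' w else σ w) w = ∑ w ∈ C, φ (σ' w) w + ∑ w ∈ Cᶜ, φ (σ w) w := by
  rw [← sum_add_sum_compl C]
  congr 1 <;> refine sum_congr rfl fun w hw => ?_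
  · rw [if_pos hw]
  · rw [if_neg (mem_compl.1 hw)]

variable [DecidableEq I]

lemma exists_exchange_perm {σ σ' : X → I} (hfib : ∀ i, #{w | σ w = i} = #{w | σ' w = i})
    {x₀ u₀ : X} (hx₀ : σ x₀ ≠ σ' x₀) (hu₀ : σ u₀ = σ' x₀) (hu₀' : σ u₀ ≠ σ' u₀) :
    ∃ F : Equiv.Perm X, F x₀ = u₀ ∧ ∀ w, σ w ≠ σ' w → σ (F w) = σ' w ∧ σ (F w) ≠ σ' (F w) := by
  -- `none` is the common fibre of the items on which `σ` and `σ'` agree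
  let out : X → Option I := fun w => if σ w = σ' w then none else some (σ' w)
  let into : X → Option I := fun w => if σ w = σ' w then none else some (σ w)
  have hcard : ∀ c, #{w | out w = c} = #{w | into w = c} := by
    rintro (_ | i)
    · simp [out, into]
    · have h := card_filter_add_card_filter_not (s := {w | σ' w = i}) (fun w => σ w = σ' w)
      have h' := card_filter_add_card_filter_not (s := {w | σ w = i}) (fun w => σ w = σ' w)
      have e : #{a | σ' a = i ∧ σ a = σ' a} = #{a | σ a = i ∧ σ a = σ' a} :=
        congrArg card (filter_congr fun a _ => ⟨fun ⟨h₁, h₂⟩ => ⟨h₂ ▸ h₁, h₂⟩,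
          fun ⟨h₁, h₂⟩ => ⟨h₂ ▸ h₁, h₂⟩⟩)
      simp only [filter_filter] at h h'
      simp only [out, into, Option.ite_none_left_eq_some, Option.some.injEq]
      simp only [and_comm (a := ¬ _)]
      have := hfib i
      omega
  obtain ⟨F, hF, hFx₀⟩ := Equiv.Perm.exists_comp_eq_of_card_fiber_eq hcard
    (a := x₀) (b := u₀) (by simp [out, into, hx₀, hu₀, hu₀ ▸ hu₀'])
  refine ⟨F, hFx₀, fun w hw => ?_⟩
  have := hF w
  simp only [into, out, hw, if_false] at this
  split_ifs at this with h
  exact ⟨Option.some_injective _ this, h⟩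

variable [Fintype I] {k : I → ℕ} {v : I → X → ℝ}

lemma sum_le_sum_of_card_filter_eq (hv : ∀ i x, 0 ≤ v i x) {σ σ' : X → I}
    (hσ : IsOptimal v k (ofOwner σ)) {C : Finset X}
    (hC : ∀ i, #{w ∈ C | σ' w = i} = #{w ∈ C | σ w = i}) :
    ∑ w ∈ C, v (σ' w) w ≤ ∑ w ∈ C, v (σ w) w := by
  have hτ : IsAllocation k (ofOwner fun w => if w ∈ C then σ' w else σ w) :=
    isAllocation_ofOwner_iff.2 fun i => by
      have := sum_apply_ite_mem C σ σ' fun j _ => if j = i then 1 else 0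
      have hsplit := sum_add_sum_compl C fun w => if σ w = i then 1 else 0
      simp only [← card_filter, hC] at this hsplit
      rw [this, hsplit, isAllocation_ofOwner_iff.1 hσ.1 i]
  have := hσ.2 _ hτ
  rw [socialWelfare_ofOwner hv hτ, socialWelfare_ofOwner hv hσ.1, sum_apply_ite_mem,
    ← sum_add_sum_compl C] at this
  linarith

lemma sum_eq_sum_of_card_filter_eq (hv : ∀ i x, 0 ≤ v i x) {σ σ' : X → I}
    (hσ : IsOptimal v k (ofOwner σ)) (hσ' : IsOptimal v k (ofOwner σ')) {C : Finset X}
    (hC : ∀ i, #{w ∈ C | σ' w = i} = #{w ∈ C | σ w = i}) :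
    ∑ w ∈ C, v (σ' w) w = ∑ w ∈ C, v (σ w) w :=
  le_antisymm (sum_le_sum_of_card_filter_eq hv hσ hC)
    (sum_le_sum_of_card_filter_eq hv hσ' fun i => (hC i).symm)

end Exchange

section Walk

variable {X I : Type*}

def IsWalk (R : I → X → X → Prop) (n : ℕ) (j : ℕ → I) (z : ℕ → X) : Prop :=
  ∀ s < n, R (j s) (z s) (z (s + 1))

def walkWeight (v : I → X → ℝ) (n : ℕ) (j : ℕ → I) (z : ℕ → X) : ℝ :=
  ∑ s ∈ range n, (v (j s) (z s) - v (j s) (z (s + 1)))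

def HasWalk (R : I → X → X → Prop) (v : I → X → ℝ) (x y : X) (n : ℕ) (c : ℝ) : Prop :=
  ∃ j z, z 0 = x ∧ z n = y ∧ IsWalk R n j z ∧ walkWeight v n j z = c

variable {R : I → X → X → Prop} {v : I → X → ℝ}

lemma HasWalk.single {i : I} {x y : X} (h : R i x y) : HasWalk R v x y 1 (v i x - v i y) :=
  ⟨fun _ => i, fun s => if s = 0 then x else y, rfl, rfl,
    fun s hs => by simpa [Nat.lt_one_iff.1 hs] using h, by simp [walkWeight]⟩

lemma HasWalk.trans {x y w : X} {m n : ℕ} {c d : ℝ} (h₁ : HasWalk R v x y m c)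
    (h₂ : HasWalk R v y w n d) : HasWalk R v x w (m + n) (c + d) := by
  obtain ⟨j₁, z₁, hx, hy, hw₁, rfl⟩ := h₁
  obtain ⟨j₂, z₂, hy', hw, hw₂, rfl⟩ := h₂
  let j s := if s < m then j₁ s else j₂ (s - m)
  let z s := if s < m then z₁ s else z₂ (s - m)
  have hj₁ : ∀ s < m, j s = j₁ s := fun s hs => if_pos hs
  have hz₁ : ∀ s ≤ m, z s = z₁ s := fun s hs => by
    rcases hs.lt_or_eq with hs | rfl
    · exact if_pos hs
    · simp [z, hy, hy']
  have hj₂ : ∀ s, j (m + s) = j₂ s := fun s => by simp [j]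
  have hz₂ : ∀ s, z (m + s) = z₂ s := fun s => by simp [z]
  refine ⟨j, z, by rw [hz₁ 0 m.zero_le, hx], by rw [hz₂, hw], fun s hs => ?_, ?_⟩
  · rcases lt_or_ge s m with h | h
    · rw [hj₁ s h, hz₁ s h.le, hz₁ (s + 1) h]
      exact hw₁ s h
    · obtain ⟨s, rfl⟩ := Nat.exists_eq_add_of_le h
      rw [hj₂, hz₂, add_assoc, hz₂]
      exact hw₂ s (by omega)
  · rw [walkWeight, sum_range_add]
    congr 1
    · refine sum_congr rfl fun s hs => ?_
      have hs := mem_range.1 hs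
      rw [hj₁ s hs, hz₁ s hs.le, hz₁ (s + 1) hs]
    · exact sum_congr rfl fun s _ => by rw [hj₂, hz₂, add_assoc, hz₂]

lemma HasWalk.exists_cycle {i : I} {x y : X} {m : ℕ} {c : ℝ} (hxy : R i x y)
    (h : HasWalk R v y x m c) (hm : 1 ≤ m) :
    ∃ (z : Fin (m + 1) → X) (j : Fin (m + 1) → I), z 0 = x ∧ z 1 = y ∧ j 0 = i ∧
      (∀ s, R (j s) (z s) (z (s + 1))) ∧
      ∑ s, (v (j s) (z s) - v (j s) (z (s + 1))) = v i x - v i y + c := by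
  obtain ⟨jt, zt, hy, hx, hwalk, rfl⟩ := h
  let Z s := if s = 0 then x else zt (s - 1)
  let J s := if s = 0 then i else jt (s - 1)
  have hZ : ∀ s : Fin (m + 1), Z ↑(s + 1) = Z (s + 1) := fun s => by
    rw [Fin.val_add_one]
    split_ifs with h
    · simp [Z, h, hx]
    · rfl
  obtain ⟨m, rfl⟩ := Nat.exists_eq_add_of_le' hm
  refine ⟨fun s => Z s, fun s => J s, by simp [Z], by simp [Z, hy], by simp [J], fun s => ?_, ?_⟩
  · simp only [hZ s]
    rcases s with ⟨_ | s, hs⟩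
    · simpa [Z, J, hy] using hxy
    · simpa [Z, J] using hwalk s (by omega)
  · simp_rw [hZ]
    rw [Fin.sum_univ_eq_sum_range (fun s => v (J s) (Z s) - v (J s) (Z (s + 1))), sum_range_succ',
      walkWeight]
    simp [Z, J, hy]
    ring

end Walk

section Backward

variable {X I : Type*} [Fintype X] [DecidableEq X] [Fintype I] [DecidableEq I]
  {k : I → ℕ} {v : I → X → ℝ}

lemma isArc_of_ofOwner {σ : X → I} (hσ : IsOptimal v k (ofOwner σ)) {x y : X} (h : σ y ≠ σ x) :
    IsArc v k (σ x) x y :=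
  ⟨⟨_, hσ, mem_ofOwner.2 rfl⟩, ⟨_, hσ, mem_ofOwner.not.2 h⟩⟩

lemma walkWeight_orbit_eq_zero (hv : ∀ i x, 0 ≤ v i x) {σ σ' : X → I}
    (hσ : IsOptimal v k (ofOwner σ)) (hσ' : IsOptimal v k (ofOwner σ')) (F : Equiv.Perm X)
    (x₀ : X) (hF : ∀ s, σ (F^[s + 1] x₀) = σ' (F^[s] x₀)) :
    walkWeight v (Function.minimalPeriod F x₀) (fun s => σ' (F^[s] x₀)) (fun s => F^[s] x₀) =
      0 := by
  set n := Function.minimalPeriod F x₀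
  let g : ℕ → X := fun s => F^[s] x₀
  have hg : ∀ s, g (s + 1) = F (g s) := fun s => Function.iterate_succ_apply' F s x₀
  have hn : 0 < n := Function.minimalPeriod_pos_of_mem_periodicPts (F.injective.mem_periodicPts x₀)
  let C := (range n).image g
  have hinj : Set.InjOn g (range n) := fun a ha b hb =>
    Function.iterate_injOn_Iio_minimalPeriod (by simpa using ha) (by simpa using hb)
  have hCF : C.map F.toEmbedding = C := map_eq_of_subset fun w hw => by
    obtain ⟨_, hs, rfl⟩ := mem_map.1 hw
    obtain ⟨s, -, rfl⟩ := mem_image.1 hs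
    exact mem_image.2 ⟨(s + 1) % n, mem_range.2 (Nat.mod_lt _ hn),
      Function.iterate_mod_minimalPeriod_eq.trans (hg s)⟩
  have hC := sum_eq_sum_of_card_filter_eq hv hσ hσ' (card_filter_eq_of_map_eq F hCF fun w hw => by
    obtain ⟨s, -, rfl⟩ := mem_image.1 hw
    rw [← hg]
    exact hF s)
  rw [walkWeight, sum_congr rfl fun s _ => congrArg (v (σ' (g s)) (g s) - v · (g (s + 1)))
      (hF s).symm, sum_sub_distrib, sum_range_succ_eq_of_eq (f := fun s => v (σ (g s)) (g s))
      (by simp [g, n, Function.iterate_minimalPeriod]), ← sum_image hinj (f := fun w => v (σ' w) w),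
    ← sum_image hinj (f := fun w => v (σ w) w)]
  exact sub_eq_zero.2 hC

theorem hasWalk_of_ofOwner (hv : ∀ i x, 0 ≤ v i x) {σ σ' : X → I}
    (hσ : IsOptimal v k (ofOwner σ)) (hσ' : IsOptimal v k (ofOwner σ'))
    {x₀ u₀ : X} (hx₀ : σ x₀ ≠ σ' x₀) (hu₀ : σ u₀ = σ' x₀) (hu₀' : σ u₀ ≠ σ' u₀) :
    ∃ n, HasWalk (IsArc v k) v u₀ x₀ n (v (σ' x₀) u₀ - v (σ' x₀) x₀) := by
  obtain ⟨F, hFx₀, hF⟩ := exists_exchange_perm (fun i => by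
    rw [isAllocation_ofOwner_iff.1 hσ.1, isAllocation_ofOwner_iff.1 hσ'.1]) hx₀ hu₀ hu₀'
  let g : ℕ → X := fun s => F^[s] x₀
  have hg : ∀ s, g (s + 1) = F (g s) := fun s => Function.iterate_succ_apply' F s x₀
  have hgD : ∀ s, σ (g s) ≠ σ' (g s) := fun s => by
    induction s with
    | zero => exact hx₀
    | succ s ih => rw [hg]; exact (hF _ ih).2
  have hσg : ∀ s, σ (g (s + 1)) = σ' (g s) := fun s => by rw [hg]; exact (hF _ (hgD s)).1
  have hcycle := walkWeight_orbit_eq_zero hv hσ hσ' F x₀ hσg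
  obtain ⟨m, hm⟩ : ∃ m, Function.minimalPeriod F x₀ = m + 1 :=
    Nat.exists_eq_add_one.2
      (Function.minimalPeriod_pos_of_mem_periodicPts (F.injective.mem_periodicPts x₀))
  refine ⟨m, fun s => σ' (g (s + 1)), fun s => g (s + 1), hFx₀, ?_, fun s _ => ?_, ?_⟩
  · show g (m + 1) = x₀
    rw [← hm]
    exact Function.iterate_minimalPeriod
  · exact isArc_of_ofOwner hσ' fun h => hgD (s + 2) (by rw [hσg, h])
  · rw [hm, walkWeight, sum_range_succ', show F^[0 + 1] x₀ = u₀ from hFx₀] at hcycle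
    change _ + (v (σ' x₀) x₀ - v (σ' x₀) u₀) = 0 at hcycle
    rw [walkWeight]
    linarith

theorem hasWalk_of_exchange (hv : ∀ i x, 0 ≤ v i x) {O O' : I → Finset X}
    (hO : IsOptimal v k O) (hO' : IsOptimal v k O') {i : I} {x₀ u₀ : X}
    (hx₀ : x₀ ∈ O' i) (hx₀' : x₀ ∉ O i) (hu₀ : u₀ ∈ O i) (hu₀' : u₀ ∉ O' i) :
    ∃ n, HasWalk (IsArc v k) v u₀ x₀ n (v i u₀ - v i x₀) := by
  obtain ⟨σ, rfl⟩ := hO.1.exists_eq_ofOwner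
  obtain ⟨σ', rfl⟩ := hO'.1.exists_eq_ofOwner
  simp only [mem_ofOwner] at hx₀ hx₀' hu₀ hu₀'
  subst hx₀
  exact hasWalk_of_ofOwner hv hO hO' hx₀' hu₀ (hu₀ ▸ Ne.symm hu₀')

theorem exists_hasWalk_of_isArc_of_isArc (hv : ∀ i x, 0 ≤ v i x) {i : I} {x y : X}
    (hxy : IsArc v k i x y) (hyx : IsArc v k i y x) :
    ∃ m, 1 ≤ m ∧ HasWalk (IsArc v k) v y x m (v i y - v i x) := by
  obtain ⟨⟨P, hP, hxP⟩, T, hT, hyT⟩ := hxy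
  obtain ⟨⟨R, hR, hyR⟩, Q, hQ, hxQ⟩ := hyx
  obtain ⟨u, hu⟩ : (Q i \ P i).Nonempty := by
    rw [← card_pos, hQ.1.card_sdiff_comm hP.1]
    exact card_pos.2 ⟨x, mem_sdiff.2 ⟨hxP, hxQ⟩⟩
  obtain ⟨w, hw⟩ : (T i \ R i).Nonempty := by
    rw [← card_pos, hT.1.card_sdiff_comm hR.1]
    exact card_pos.2 ⟨y, mem_sdiff.2 ⟨hyR, hyT⟩⟩
  rw [mem_sdiff] at hu hw
  obtain ⟨n₁, h₁⟩ := hasWalk_of_exchange hv hQ hP hxP hxQ hu.1 hu.2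
  obtain ⟨n₂, h₂⟩ := hasWalk_of_exchange hv hR hT hw.1 hw.2 hyR hyT
  refine ⟨n₂ + (1 + n₁), by omega, ?_⟩
  convert h₂.trans ((HasWalk.single ⟨⟨T, hT, hw.1⟩, P, hP, hu.2⟩).trans h₁) using 1
  ring

end Backward

theorem edge_in_zero_weight_cycle_iff_general
    {X I : Type*} [Fintype X] [DecidableEq X] [Fintype I] [DecidableEq I]
    (k : I → ℕ) (hsum : ∑ i, k i = Fintype.card X)
    (v : I → X → ℝ) (hv : ∀ i x, 0 ≤ v i x)
    (K : ℕ)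
    (Oenum : Fin K → I → Finset X)
    (hall : ∀ O : I → Finset X, IsOptimal v k O ↔ ∃ t, Oenum t = O)
    (a : I → X → ℝ)
    (ha : ∀ i x, a i x =
      ((Finset.univ.filter (fun t : Fin K => x ∈ Oenum t i)).card : ℝ) / K)
    (ih : I) (x y : X) (hax : 0 < a ih x) (hay : a ih y < 1) :
    (∃ l : ℕ, 1 ≤ l ∧
      ∃ (z : Fin (l + 1) → X) (jj : Fin (l + 1) → I),
        z 0 = x ∧ z 1 = y ∧ jj 0 = ih ∧
        (∀ s, 0 < a (jj s) (z s)) ∧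
        (∀ s, a (jj s) (z (s + 1)) < 1) ∧
        (∑ s, (v (jj s) (z s) - v (jj s) (z (s + 1)))) = 0) ↔
    (0 < a ih x ∧ a ih x < 1 ∧ 0 < a ih y ∧ a ih y < 1) := by
  have hopt : ∀ p : (I → Finset X) → Prop, (∃ t, p (Oenum t)) ↔ ∃ O, IsOptimal v k O ∧ p O :=
    fun p => ⟨fun ⟨t, ht⟩ => ⟨_, (hall _).2 ⟨t, rfl⟩, ht⟩, fun ⟨O, hO, hp⟩ => by
      obtain ⟨t, rfl⟩ := (hall O).1 hO
      exact ⟨t, hp⟩⟩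
  have hK : 0 < K := by
    rw [ha, card_filter_div_pos_iff] at hax
    exact hax.choose.pos
  have harc : ∀ i w w', (0 < a i w ∧ a i w' < 1) ↔ IsArc v k i w w' := fun i w w' => by
    rw [ha, ha, card_filter_div_pos_iff, card_filter_div_lt_one_iff hK, hopt (w ∈ · i),
      hopt (w' ∉ · i), IsArc]
  constructor
  · rintro ⟨l, -, z, j, rfl, rfl, rfl, hin, hout, hzero⟩
    have := isArc_swap_of_cycle hsum hv z j (fun s => (harc ..).1 ⟨hin s, hout s⟩) hzero 0
    rw [zero_add, ← harc] at this
    exact ⟨hax, this.2, this.1, hay⟩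
  · rintro ⟨-, hx₁, hy₀, -⟩
    have hxy := (harc ..).1 ⟨hax, hay⟩
    obtain ⟨m, hm, hw⟩ := exists_hasWalk_of_isArc_of_isArc hv hxy ((harc ..).1 ⟨hy₀, hx₁⟩)
    obtain ⟨z, j, hz₀, hz₁, hj₀, hzj, hweight⟩ := hw.exists_cycle hxy hm
    refine ⟨m, hm, z, j, hz₀, hz₁, hj₀, fun s => ((harc ..).2 (hzj s)).1,
      fun s => ((harc ..).2 (hzj s)).2, ?_⟩
    rw [hweight]
    ring

/-- An edge `x → y` of the auxiliary graph (induced by player `î`) lies on a `0`-weight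
cycle if and only if `0 < a^î_x < 1` and `0 < a^î_y < 1`. -/
theorem edge_in_zero_weight_cycle_iff
    {X I : Type*} [Fintype X] [DecidableEq X] [Fintype I] [DecidableEq I]
    (k : I → ℕ) (hk : ∀ i, 1 ≤ k i) (hsum : ∑ i, k i = Fintype.card X)
    (v : I → X → ℝ) (hv : ∀ i x, 0 ≤ v i x)
    (K : ℕ) (hK : 1 ≤ K)
    (Oenum : Fin K → I → Finset X)
    (hinj : Function.Injective Oenum)
    (hall : ∀ O : I → Finset X, IsOptimal v k O ↔ ∃ t, Oenum t = O)
    (a : I → X → ℝ)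
    (ha : ∀ i x, a i x =
      ((Finset.univ.filter (fun t : Fin K => x ∈ Oenum t i)).card : ℝ) / K)
    (ih : I) (x y : X) (hax : 0 < a ih x) (hay : a ih y < 1) :
    (∃ l : ℕ, 1 ≤ l ∧
      ∃ (z : Fin (l + 1) → X) (jj : Fin (l + 1) → I),
        z 0 = x ∧ z 1 = y ∧ jj 0 = ih ∧
        (∀ s, 0 < a (jj s) (z s)) ∧
        (∀ s, a (jj s) (z (s + 1)) < 1) ∧
        (∑ s, (v (jj s) (z s) - v (jj s) (z (s + 1)))) = 0) ↔
    (0 < a ih x ∧ a ih x < 1 ∧ 0 < a ih y ∧ a ih y < 1) :=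
  edge_in_zero_weight_cycle_iff_general k hsum v hv K Oenum hall a ha ih x y hax hay
end

section
/- In a simplified market in which every item is legal to at least two players, every edge of the legality graph G(O) of a legal allocation O lies on a directed cycle of G(O). -/
/-!
Suppose `x → y` is an edge, via player `i` with `x ∈ O i` and `y ∈ 𝓛 i ∖ O i`, and let `T` be
the set of players whose bundle contains an item reachable from `y`. Every item legal to a
player of `T` lies in some bundle of `T`, so by counting, every legal allocation hands the items
of these bundles to players of `T`. Tightness applied to `y ∈ 𝓛 i` puts `i` in `T`; applied to a
second player `m` with `x ∈ 𝓛 m` it puts `m` in `T`. So some item reachable from `y` lies in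
`O m`, and it has an edge to `x`. Cutting the loops out of the resulting path from `y` back to
`x` gives a simple cycle through the edge `x → y`.
-/

open Finset

/-- A legal allocation of a simplified market: a partition of the items into bundles
`O i` with `|O i| = k i` and `O i ⊆ 𝓛 i` for every player `i`. -/
def LegalAlloc {X I : Type*} (k : I → ℕ) (L : I → Finset X) (O : I → Finset X) : Prop :=
  (∀ i, (O i).card = k i) ∧ (∀ x : X, ∃! i, x ∈ O i) ∧ (∀ i, O i ⊆ L i)

/-- The edge relation of the legality graph `G(O)`: `x → y` iff some player `i`
has `x ∈ O i` and `y ∈ 𝓛 i ∖ O i`. -/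
def LegalityEdge {X I : Type*} (L : I → Finset X) (O : I → Finset X) (x y : X) : Prop :=
  ∃ i, x ∈ O i ∧ y ∈ L i ∧ y ∉ O i

namespace List

variable {α : Type*} {r : α → α → Prop}

theorem exists_nodup_isChain_cons_of_reflTransGen {a b : α} (h : Relation.ReflTransGen r a b) :
    ∃ l, IsChain r (a :: l) ∧ (a :: l).Nodup ∧ (a :: l).getLast (cons_ne_nil _ _) = b := by
  induction h using Relation.ReflTransGen.head_induction_on with
  | refl => exact ⟨[], isChain_singleton _, nodup_singleton _, rfl⟩
  | @head a c hac _ ih =>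
    obtain ⟨l, hch, hnd, hlast⟩ := ih
    by_cases ha : a ∈ c :: l
    · obtain ⟨s, t, hst⟩ := append_of_mem ha
      rw [hst] at hch hnd
      refine ⟨t, hch.right_of_append, hnd.of_append_right, ?_⟩
      rw [← hlast, getLast_congr _ (by simp) hst, getLast_append_of_ne_nil]
    · exact ⟨c :: l, hch.cons_cons hac, nodup_cons.2 ⟨ha, hnd⟩, by rwa [getLast_cons]⟩

theorem exists_injective_cycle {a b : α} {l : List α}
    (hnd : (a :: b :: l).Nodup) (hch : IsChain r (a :: b :: l ++ [a])) :
    ∃ (n : ℕ) (z : Fin (n + 1) → α),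
      Function.Injective z ∧ z 0 = a ∧ z 1 = b ∧ ∀ j, r (z j) (z (j + 1)) := by
  refine ⟨l.length + 1, (a :: b :: l).get, nodup_iff_injective_get.1 hnd, rfl, rfl, fun j => ?_⟩
  have hj := isChain_iff_getElem.1 hch j (by simpa using j.isLt)
  rw [getElem_append_left j.isLt] at hj
  by_cases hlast : j = Fin.last _
  · subst hlast
    rw [Fin.last_add_one]
    simpa using hj
  · have hsucc := Fin.val_add_one_of_lt (lt_of_le_of_ne (Fin.le_last j) hlast)
    rw [getElem_append_left (by simpa [hsucc] using (j + 1).isLt)] at hj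
    simpa only [get_eq_getElem, hsucc] using hj

end List

open Relation

section Market

variable {X I : Type*} {k : I → ℕ} {L O O' : I → Finset X}

theorem LegalAlloc.eq_of_mem (hO : LegalAlloc k L O) {x : X} {i j : I} (hi : x ∈ O i)
    (hj : x ∈ O j) : i = j :=
  (hO.2.1 x).unique hi hj

theorem LegalAlloc.card_biUnion [DecidableEq X] (hO : LegalAlloc k L O) (T : Finset I) :
    #(T.biUnion O) = ∑ j ∈ T, k j := by
  rw [Finset.card_biUnion fun i _ j _ hij =>
    disjoint_left.2 fun _ hi hj => hij (hO.eq_of_mem hi hj)]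
  exact sum_congr rfl fun j _ => hO.1 j

theorem LegalAlloc.biUnion_eq [DecidableEq X] (hO : LegalAlloc k L O) (hO' : LegalAlloc k L O')
    {T : Finset I} (hT : ∀ j ∈ T, L j ⊆ T.biUnion O) : T.biUnion O' = T.biUnion O :=
  eq_of_subset_of_card_le (biUnion_subset.2 fun j hj => (hO'.2.2 j).trans (hT j hj))
    (by rw [hO.card_biUnion, hO'.card_biUnion])

theorem LegalityEdge.ne {x y : X} (hxy : LegalityEdge L O x y) : x ≠ y := by
  obtain ⟨i, hxi, -, hyi⟩ := hxy
  exact fun h => hyi (h ▸ hxi)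

open Classical in
noncomputable def reachPlayers [Fintype I] (L O : I → Finset X) (y : X) : Finset I :=
  {j | ∃ z ∈ O j, ReflTransGen (LegalityEdge L O) y z}

variable [Fintype I] {y : X}

theorem mem_reachPlayers {j : I} :
    j ∈ reachPlayers L O y ↔ ∃ z ∈ O j, ReflTransGen (LegalityEdge L O) y z := by
  simp [reachPlayers]

theorem legal_subset_biUnion_reachPlayers [DecidableEq X] (hO : LegalAlloc k L O) {j : I}
    (hj : j ∈ reachPlayers L O y) : L j ⊆ (reachPlayers L O y).biUnion O := by
  obtain ⟨z, hz, hyz⟩ := mem_reachPlayers.1 hj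
  intro w hw
  by_cases hwj : w ∈ O j
  · exact mem_biUnion.2 ⟨j, hj, hwj⟩
  · obtain ⟨j', hwj', -⟩ := hO.2.1 w
    exact mem_biUnion.2 ⟨j', mem_reachPlayers.2 ⟨w, hwj', hyz.tail ⟨j, hz, hw, hwj⟩⟩, hwj'⟩

theorem mem_reachPlayers_of_mem [DecidableEq X] (hO : LegalAlloc k L O)
    (hO' : LegalAlloc k L O') {w : X} {j₀ j : I} (hj₀ : j₀ ∈ reachPlayers L O y)
    (hw₀ : w ∈ O j₀) (hw : w ∈ O' j) : j ∈ reachPlayers L O y := by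
  have hwT : w ∈ (reachPlayers L O y).biUnion O' := by
    rw [hO.biUnion_eq hO' fun _ => legal_subset_biUnion_reachPlayers hO]
    exact mem_biUnion.2 ⟨j₀, hj₀, hw₀⟩
  obtain ⟨j', hj', hwj'⟩ := mem_biUnion.1 hwT
  rwa [hO'.eq_of_mem hw hwj']

theorem LegalityEdge.reflTransGen_reverse [DecidableEq X]
    (htight : ∀ i, ∀ x ∈ L i, ∃ O : I → Finset X, LegalAlloc k L O ∧ x ∈ O i)
    (h2 : ∀ x : X, 2 ≤ #{i | x ∈ L i}) (hO : LegalAlloc k L O) {x : X}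
    (hxy : LegalityEdge L O x y) : ReflTransGen (LegalityEdge L O) y x := by
  obtain ⟨i, hxi, hyi, -⟩ := hxy
  obtain ⟨jy, hyjy, -⟩ := hO.2.1 y
  obtain ⟨Oy, hOy, hyOy⟩ := htight i y hyi
  have hiT : i ∈ reachPlayers L O y :=
    mem_reachPlayers_of_mem hO hOy (mem_reachPlayers.2 ⟨y, hyjy, .refl⟩) hyjy hyOy
  obtain ⟨m, hm, hmi⟩ := exists_mem_ne (h2 x) i
  have hxm : x ∈ L m := (mem_filter.1 hm).2
  obtain ⟨Ox, hOx, hxOx⟩ := htight m x hxm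
  obtain ⟨v, hvm, hyv⟩ := mem_reachPlayers.1 (mem_reachPlayers_of_mem hO hOx hiT hxi hxOx)
  exact hyv.tail ⟨m, hvm, hxm, fun hxOm => hmi (hO.eq_of_mem hxOm hxi)⟩

end Market

theorem every_edge_in_cycle_general
    {X I : Type*} [DecidableEq X] [Fintype I]
    (k : I → ℕ)
    (L : I → Finset X)
    (htight : ∀ i, ∀ x ∈ L i, ∃ O : I → Finset X, LegalAlloc k L O ∧ x ∈ O i)
    (h2 : ∀ x : X, 2 ≤ (Finset.univ.filter (fun i => x ∈ L i)).card)
    (O : I → Finset X) (hO : LegalAlloc k L O)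
    (x y : X) (hxy : LegalityEdge L O x y) :
    ∃ (l : ℕ) (z : Fin (l + 1) → X),
      Function.Injective z ∧ z 0 = x ∧ z 1 = y ∧
      ∀ j, LegalityEdge L O (z j) (z (j + 1)) := by
  obtain ⟨l, hchain, hnodup, hlast⟩ :=
    List.exists_nodup_isChain_cons_of_reflTransGen (hxy.reflTransGen_reverse htight h2 hO)
  rcases l.eq_nil_or_concat' with rfl | ⟨l, x', rfl⟩
  · exact absurd hlast hxy.ne.symm
  · obtain rfl : x' = x := by simpa using hlast
    exact List.exists_injective_cycle ((List.nodup_append_comm (l₁ := y :: l)).1 hnodup)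
      (hchain.cons_cons hxy)

/-- In a simplified market in which every item is legal to at least two players, every
edge of the legality graph of a legal allocation lies on a directed cycle. -/
theorem every_edge_in_cycle
    {X I : Type*} [Fintype X] [DecidableEq X] [Fintype I] [DecidableEq I]
    (k : I → ℕ) (hk : ∀ i, 1 ≤ k i) (hsum : ∑ i, k i = Fintype.card X)
    (hI : 2 ≤ Fintype.card I)
    (L : I → Finset X)
    (htight : ∀ i, ∀ x ∈ L i, ∃ O : I → Finset X, LegalAlloc k L O ∧ x ∈ O i)
    (h2 : ∀ x : X, 2 ≤ (Finset.univ.filter (fun i => x ∈ L i)).card)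
    (O : I → Finset X) (hO : LegalAlloc k L O)
    (x y : X) (hxy : LegalityEdge L O x y) :
    ∃ (l : ℕ) (z : Fin (l + 1) → X),
      Function.Injective z ∧ z 0 = x ∧ z 1 = y ∧
      ∀ j, LegalityEdge L O (z j) (z (j + 1)) :=
  every_edge_in_cycle_general k L htight h2 O hO x y hxy
end

section
/- In a simplified market in which every item is legal to at least two players, every item lies on a uniquely assigned cycle of the legality graph G(O) of a legal allocation O, i.e., on a simple directed cycle no two of whose vertices belong to the same part O_i of the allocation O. -/
open Finset

lemma shortcut_walk {X I : Type*} [DecidableEq X] [DecidableEq I]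
    (L : I → Finset X) (O O' : I → Finset X)
    (hOpart : ∀ y : X, ∃! i, y ∈ O i)
    (hO'sub : ∀ i, O' i ⊆ L i)
    (x : X) :
    ∀ l : ℕ, ∀ w : Fin (l+1) → X, w 0 = x →
      (∀ t i, w t ∈ O i → w t ∉ O' i) →
      (∀ t, ∃ i, w t ∈ O i ∧ w (t+1) ∈ O' i) →
      ∃ (l' : ℕ) (z : Fin (l' + 1) → X),
        Function.Injective z ∧ z 0 = x ∧
        (∀ j, LegalityEdge L O (z j) (z (j + 1))) ∧
        (∀ i, (Finset.univ.filter (fun j : Fin (l' + 1) => z j ∈ O i)).card ≤ 1) := by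
  intro l
  induction l using Nat.strong_induction_on with
  | _ l IH =>
  intro w hw0 hD hP
  have hpmem : ∀ t, w t ∈ O ((hOpart (w t)).choose) := fun t => (hOpart (w t)).choose_spec.1
  set p : Fin (l+1) → I := fun t => (hOpart (w t)).choose with hp
  have hpuniq : ∀ (t : Fin (l+1)) (i : I), w t ∈ O i → i = p t :=
    fun t i h => (hOpart (w t)).choose_spec.2 i h
  have hwcongr : ∀ (a b : ℕ) (ha : a < l+1) (hb : b < l+1), a = b →
      w ⟨a, ha⟩ = w ⟨b, hb⟩ := by
    intro a b ha hb h
    subst h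
    rfl
  have hsucc : ∀ u : Fin (l+1), ((u+1 : Fin (l+1)) : ℕ) = if (u:ℕ) = l then 0 else (u:ℕ)+1 := by
    intro u
    rw [Fin.val_add_one]
    simp [Fin.ext_iff, Fin.val_last]
  have hstep : ∀ (a : ℕ) (ha : a < l), (⟨a, by omega⟩ + 1 : Fin (l+1)) = ⟨a+1, by omega⟩ := by
    intro a ha
    apply Fin.ext
    rw [hsucc]
    simp only [Fin.val_mk]
    rw [if_neg (by omega)]
  have hlast : ((⟨l, by omega⟩ : Fin (l+1)) + 1) = 0 := by
    apply Fin.ext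
    rw [hsucc]
    simp
  by_cases hinj : Function.Injective p
  · refine ⟨l, w, ?_, hw0, ?_, ?_⟩
    · intro a b hab
      apply hinj
      exact (hpuniq a (p b) (by rw [hab]; exact hpmem b)).symm
    · intro j
      obtain ⟨i, h1, h2⟩ := hP j
      exact ⟨i, h1, hO'sub i h2, fun hmem => hD (j+1) i hmem h2⟩
    · intro i
      rw [Finset.card_le_one]
      intro a ha b hb
      rw [Finset.mem_filter] at ha hb
      apply hinj
      rw [← hpuniq a i ha.2, ← hpuniq b i hb.2]
  · rw [Function.not_injective_iff] at hinj
    obtain ⟨a, b, hab, hne⟩ := hinj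
    obtain ⟨s, t, hst, hpe⟩ : ∃ s t : Fin (l+1), (s:ℕ) < (t:ℕ) ∧ p s = p t := by
      rcases lt_or_gt_of_ne hne with h | h
      · exact ⟨a, b, h, hab⟩
      · exact ⟨b, a, h, hab.symm⟩
    have htle : (t:ℕ) ≤ l := Nat.lt_succ_iff.mp t.isLt
    have hnotfull : ¬((s:ℕ) = 0 ∧ (t:ℕ) = l) := by
      rintro ⟨hs0, htl⟩
      obtain ⟨i, h1, h2⟩ := hP t
      have htt : t = ⟨l, by omega⟩ := Fin.ext htl
      have ht1 : t + 1 = 0 := by rw [htt]; exact hlast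
      rw [ht1] at h2
      have hi : i = p t := hpuniq t i h1
      have hs0' : s = 0 := Fin.ext hs0
      have hi0 : i = p 0 := by rw [hi, ← hpe, hs0']
      exact hD 0 i (by rw [hi0]; exact hpmem 0) h2
    set d : ℕ := (t:ℕ) - (s:ℕ) with hd
    have hd1 : 1 ≤ d := by omega
    have hdl : d < l := by
      rcases Nat.lt_or_ge d l with h | h
      · exact h
      · exact absurd (by omega) hnotfull
    set m : ℕ := l - d with hm
    have hml : m < l := by omega
    have hslem : (s:ℕ) ≤ m := by omega
    set w' : Fin (m+1) → X := fun u =>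
      if h : (u:ℕ) ≤ (s:ℕ) then w ⟨(u:ℕ), by omega⟩
      else w ⟨(u:ℕ) + d, by have := Nat.lt_succ_iff.mp u.isLt; omega⟩ with hw'
    have hw'lo : ∀ (u : Fin (m+1)) (h : (u:ℕ) ≤ (s:ℕ)), w' u = w ⟨(u:ℕ), by omega⟩ := by
      intro u h
      simp only [hw']
      rw [dif_pos h]
    have hw'hi : ∀ (u : Fin (m+1)) (h : ¬(u:ℕ) ≤ (s:ℕ)),
        w' u = w ⟨(u:ℕ) + d, by have := Nat.lt_succ_iff.mp u.isLt; omega⟩ := by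
      intro u h
      simp only [hw']
      rw [dif_neg h]
    have hw'0 : w' 0 = x := by
      rw [hw'lo 0 (Nat.zero_le _), ← hw0]
      exact hwcongr _ _ _ _ rfl
    have hD' : ∀ (u : Fin (m+1)) (i : I), w' u ∈ O i → w' u ∉ O' i := by
      intro u i
      by_cases h : (u:ℕ) ≤ (s:ℕ)
      · rw [hw'lo u h]; exact hD _ i
      · rw [hw'hi u h]; exact hD _ i
    have hsucc' : ∀ u : Fin (m+1), ((u+1 : Fin (m+1)) : ℕ) = if (u:ℕ) = m then 0 else (u:ℕ)+1 := by
      intro u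
      rw [Fin.val_add_one]
      simp [Fin.ext_iff, Fin.val_last]
    have hP' : ∀ u, ∃ i, w' u ∈ O i ∧ w' (u+1) ∈ O' i := by
      intro u
      have hum : (u:ℕ) ≤ m := Nat.lt_succ_iff.mp u.isLt
      rcases Nat.lt_or_ge (u:ℕ) m with hu | hu
      · have h1v : ((u+1 : Fin (m+1)) : ℕ) = (u:ℕ)+1 := by
          rw [hsucc', if_neg (by omega)]
        rcases Nat.lt_trichotomy (u:ℕ) (s:ℕ) with hus | hus | hus
        · -- both indices < s : copy of original
          have e1 : w' u = w ⟨(u:ℕ), by omega⟩ := hw'lo u (le_of_lt hus)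
          have e2 : w' (u+1) = w ⟨(u:ℕ)+1, by omega⟩ := by
            rw [hw'lo (u+1) (by omega)]
            exact hwcongr _ _ _ _ h1v
          obtain ⟨i, g1, g2⟩ := hP ⟨(u:ℕ), by omega⟩
          rw [hstep (u:ℕ) (by omega)] at g2
          exact ⟨i, by rw [e1]; exact g1, by rw [e2]; exact g2⟩
        · -- u = s : jump across removed arc
          have e1 : w' u = w ⟨(s:ℕ), by omega⟩ := by
            rw [hw'lo u (le_of_eq hus)]
            exact hwcongr _ _ _ _ hus
          have e2 : w' (u+1) = w ⟨(t:ℕ)+1, by omega⟩ := by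
            rw [hw'hi (u+1) (by omega)]
            exact hwcongr _ _ _ _ (by omega)
          obtain ⟨i, g1, g2⟩ := hP t
          have htmk : t = ⟨(t:ℕ), by omega⟩ := Fin.ext rfl
          rw [htmk, hstep (t:ℕ) (by omega)] at g2
          have hi : i = p t := hpuniq t i g1
          refine ⟨i, ?_, by rw [e2]; exact g2⟩
          rw [e1]
          have hse : (⟨(s:ℕ), by omega⟩ : Fin (l+1)) = s := Fin.ext rfl
          rw [hse, hi, ← hpe]
          exact hpmem s
        · -- u > s : shifted copy
          have e1 : w' u = w ⟨(u:ℕ) + d, by omega⟩ := hw'hi u (by omega)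
          have e2 : w' (u+1) = w ⟨(u:ℕ) + 1 + d, by omega⟩ := by
            rw [hw'hi (u+1) (by omega)]
            exact hwcongr _ _ _ _ (by omega)
          obtain ⟨i, g1, g2⟩ := hP ⟨(u:ℕ) + d, by omega⟩
          rw [hstep ((u:ℕ)+d) (by omega)] at g2
          refine ⟨i, by rw [e1]; exact g1, ?_⟩
          rw [e2]
          rw [hwcongr ((u:ℕ)+1+d) ((u:ℕ)+d+1) (by omega) (by omega) (by omega)]
          exact g2
      · -- wrap around
        have huv : (u:ℕ) = m := le_antisymm hum hu
        have h1v : (u+1 : Fin (m+1)) = 0 := by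
          apply Fin.ext
          rw [hsucc', if_pos huv]
          simp
        rw [h1v, hw'0]
        rcases Nat.lt_or_ge (s:ℕ) m with hsm | hsm
        · have e1 : w' u = w ⟨l, by omega⟩ := by
            rw [hw'hi u (by omega)]
            exact hwcongr _ _ _ _ (by omega)
          obtain ⟨i, g1, g2⟩ := hP ⟨l, by omega⟩
          rw [hlast, hw0] at g2
          exact ⟨i, by rw [e1]; exact g1, g2⟩
        · have hsv : (s:ℕ) = m := le_antisymm hslem hsm
          have htv : (t:ℕ) = l := by omega
          have e1 : w' u = w s := by
            rw [hw'lo u (le_of_eq (by omega : (u:ℕ) = (s:ℕ)))]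
            exact congrArg w (Fin.ext (by simp only [Fin.val_mk]; omega))
          obtain ⟨i, g1, g2⟩ := hP t
          have htt : t = ⟨l, by omega⟩ := Fin.ext htv
          rw [htt, hlast, hw0] at g2
          have hi : i = p t := hpuniq t i g1
          refine ⟨i, ?_, g2⟩
          rw [e1, hi, ← hpe]
          exact hpmem s
    exact IH m hml w' hw'0 hD' hP'

/-- In a simplified market in which every item is legal to at least two players, every
item lies on a uniquely assigned cycle of the legality graph of a legal allocation:
a simple directed cycle with at most one vertex in each part `O i`. -/
theorem every_item_in_uniquely_assigned_cycle
    {X I : Type*} [Fintype X] [DecidableEq X] [Fintype I] [DecidableEq I]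
    (k : I → ℕ) (hk : ∀ i, 1 ≤ k i) (hsum : ∑ i, k i = Fintype.card X)
    (hI : 2 ≤ Fintype.card I)
    (L : I → Finset X)
    (htight : ∀ i, ∀ x ∈ L i, ∃ O : I → Finset X, LegalAlloc k L O ∧ x ∈ O i)
    (h2 : ∀ x : X, 2 ≤ (Finset.univ.filter (fun i => x ∈ L i)).card)
    (O : I → Finset X) (hO : LegalAlloc k L O)
    (x : X) :
    ∃ (l : ℕ) (z : Fin (l + 1) → X),
      Function.Injective z ∧ z 0 = x ∧
      (∀ j, LegalityEdge L O (z j) (z (j + 1))) ∧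
      (∀ i, (Finset.univ.filter (fun j : Fin (l + 1) => z j ∈ O i)).card ≤ 1) := by
  classical
  obtain ⟨hOcard, hOpart, hOsub⟩ := hO
  set ow : X → I := fun y => (hOpart y).choose with how
  have howmem : ∀ y, y ∈ O (ow y) := fun y => (hOpart y).choose_spec.1
  have howuniq : ∀ y i, y ∈ O i → i = ow y := fun y i h => (hOpart y).choose_spec.2 i h
  -- a second player j ≠ ow x with x ∈ L j
  obtain ⟨j, hjmem, hjne⟩ :=
    Finset.exists_mem_ne (lt_of_lt_of_le one_lt_two (h2 x)) (ow x)
  have hxLj : x ∈ L j := (Finset.mem_filter.mp hjmem).2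
  obtain ⟨O', hO', hxO'⟩ := htight j x hxLj
  obtain ⟨hO'card, hO'part, hO'sub⟩ := hO'
  have hxD : x ∉ O' (ow x) := fun h => hjne ((hO'part x).unique hxO' h)
  -- per-player bijections between disagreement sets
  have hcards : ∀ i, (O i \ O' i).card = (O' i \ O i).card := fun i =>
    Finset.card_sdiff_comm (by rw [hOcard i, hO'card i])
  have e : ∀ i, {a // a ∈ O i \ O' i} ≃ {a // a ∈ O' i \ O i} :=
    fun i => Finset.equivOfCardEq (hcards i)
  have ecoe : ∀ (i i' : I), i = i' → ∀ (z : X) (hz : z ∈ O i \ O' i) (hz' : z ∈ O i' \ O' i'),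
      ((e i) ⟨z, hz⟩ : X) = ((e i') ⟨z, hz'⟩ : X) := by
    rintro i i' rfl z hz hz'
    rfl
  set f : X → X := fun y =>
    if h : y ∈ O' (ow y) then y
    else ((e (ow y)) ⟨y, Finset.mem_sdiff.mpr ⟨howmem y, h⟩⟩ : X) with hf
  have hfid : ∀ y (h : y ∈ O' (ow y)), f y = y := by
    intro y h
    simp only [hf]
    rw [dif_pos h]
  have hfval : ∀ y (h : y ∉ O' (ow y)),
      f y = ((e (ow y)) ⟨y, Finset.mem_sdiff.mpr ⟨howmem y, h⟩⟩ : X) := by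
    intro y h
    simp only [hf]
    rw [dif_neg h]
  have hfmem : ∀ y (h : y ∉ O' (ow y)), f y ∈ O' (ow y) \ O (ow y) := by
    intro y h
    rw [hfval y h]
    exact ((e (ow y)) ⟨y, Finset.mem_sdiff.mpr ⟨howmem y, h⟩⟩).2
  have hfD : ∀ y, y ∉ O' (ow y) → f y ∉ O' (ow (f y)) := by
    intro y h hbad
    have hm := Finset.mem_sdiff.mp (hfmem y h)
    have h1 : ow (f y) ≠ ow y := fun he => hm.2 (he ▸ howmem (f y))
    exact h1 ((hO'part (f y)).unique hbad hm.1)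
  have hfinj : Function.Injective f := by
    intro a b hab
    by_cases ha : a ∈ O' (ow a) <;> by_cases hb : b ∈ O' (ow b)
    · rw [hfid a ha, hfid b hb] at hab
      exact hab
    · exfalso
      rw [hfid a ha] at hab
      have hd := hfD b hb
      rw [← hab] at hd
      exact hd ha
    · exfalso
      rw [hfid b hb] at hab
      have hd := hfD a ha
      rw [hab] at hd
      exact hd hb
    · have hma := Finset.mem_sdiff.mp (hfmem a ha)
      have hmb := Finset.mem_sdiff.mp (hfmem b hb)
      have hi : ow a = ow b := (hO'part (f a)).unique hma.1 (hab ▸ hmb.1)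
      rw [hfval a ha, hfval b hb] at hab
      have hb' : b ∈ O (ow a) \ O' (ow a) := by
        rw [hi]
        exact Finset.mem_sdiff.mpr ⟨howmem b, hb⟩
      have hab2 : ((e (ow a)) ⟨a, Finset.mem_sdiff.mpr ⟨howmem a, ha⟩⟩ : X)
          = ((e (ow a)) ⟨b, hb'⟩ : X) :=
        hab.trans (ecoe (ow b) (ow a) hi.symm b _ hb')
      have := (e (ow a)).injective (Subtype.coe_injective hab2)
      exact congrArg Subtype.val this
  -- all iterates of x are disagreement points
  have hDiter : ∀ n : ℕ, f^[n] x ∉ O' (ow (f^[n] x)) := by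
    intro n
    induction n with
    | zero => simpa using hxD
    | succ n ih =>
      rw [Function.iterate_succ_apply']
      exact hfD _ ih
  -- the orbit of x returns to x
  obtain ⟨a, b, hlt, heq⟩ : ∃ a b : ℕ, a < b ∧ f^[a] x = f^[b] x := by
    obtain ⟨a, b, hne, heq⟩ := Finite.exists_ne_map_eq_of_infinite (fun n : ℕ => f^[n] x)
    rcases lt_or_gt_of_ne hne with h | h
    · exact ⟨a, b, h, heq⟩
    · exact ⟨b, a, h, heq.symm⟩
  have hret : f^[b - a] x = x := by
    apply hfinj.iterate a
    rw [← Function.iterate_add_apply, (by omega : a + (b - a) = b)]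
    exact heq.symm
  set l : ℕ := b - a - 1 with hldef
  have hl : b - a = l + 1 := by omega
  rw [hl] at hret
  set w : Fin (l + 1) → X := fun t => f^[t.val] x with hwdef
  have hw0 : w 0 = x := by simp [hwdef]
  have hsuccw : ∀ t : Fin (l + 1), w (t + 1) = f (w t) := by
    intro t
    by_cases h : t = Fin.last l
    · have h1 : t + 1 = 0 := by
        subst h
        apply Fin.ext
        rw [Fin.val_add_one]
        simp
      rw [h1, hw0]
      subst h
      simp only [hwdef, Fin.val_last]
      rw [← Function.iterate_succ_apply' f l x]
      exact hret.symm
    · have h1 : ((t + 1 : Fin (l + 1)) : ℕ) = (t : ℕ) + 1 := by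
        rw [Fin.val_add_one, if_neg h]
      simp only [hwdef]
      rw [h1]
      exact Function.iterate_succ_apply' f (t : ℕ) x
  have hDw : ∀ t i, w t ∈ O i → w t ∉ O' i := by
    intro t i hmem hmem'
    have hio : i = ow (w t) := howuniq (w t) i hmem
    have hdp : w t ∉ O' (ow (w t)) := hDiter (t : ℕ)
    exact hdp (hio ▸ hmem')
  have hP : ∀ t, ∃ i, w t ∈ O i ∧ w (t + 1) ∈ O' i := by
    intro t
    refine ⟨ow (w t), howmem (w t), ?_⟩
    rw [hsuccw t]
    have hdp : w t ∉ O' (ow (w t)) := hDiter (t : ℕ)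
    exact (Finset.mem_sdiff.mp (hfmem (w t) hdp)).1
  exact shortcut_walk L O O' hOpart hO'sub x l w hw0 hDw hP
end
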